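/- If x ∼ D_{L−c,σ₀} is a discrete Gaussian over a shifted n-dimensional lattice L − c, then P(‖x‖ > √(2πn)·σ₀) < ((1+ε_L(σ₀))/(1−ε_L(σ₀)))·2^{−n}, provided ε_L(σ₀) < 1. -/

import Mathlib

/-!
Write `ρ_b(L - x) = ∑_{v ∈ L - x} exp(-b‖v‖²)` and `b = 1/(2σ₀²)`. The flatness factor says that
`V(L) (2πσ₀²)^{-n/2} ρ_b(L - x)` lies in `[1 - ε, 1 + ε]` for every `x`: this bounds the
normalisation `ρ_b(L - c)` from below and `ρ_b` uniformly from above. On the tail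
`‖v‖ > r = √(2πn) σ₀` we have `exp(-b‖v‖²) ≤ exp(-(b - b')r²) exp(-b'‖v‖²)` with `b' = b/(2π)`,
and convolving with a Gaussian shows `ρ_{b'}(L - c) ≤ (b/b')^{n/2} sup_x ρ_b(L - x)`. So the tail
has probability at most `(e^{1/2 - π} √(2π))^n (1 + ε)/(1 - ε)`, and `e^{1/2 - π} √(2π) < 1/2`.
-/

open Real

noncomputable section

/-- Squared Euclidean norm on `Fin n → ℝ`. -/
def sqnorm {n : ℕ} (v : Fin n → ℝ) : ℝ := ∑ i, v i ^ 2

/-- Lattice point `B z` for integer vector `z`. -/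
def latp {n : ℕ} (B : Matrix (Fin n) (Fin n) ℝ) (z : Fin n → ℤ) : Fin n → ℝ :=
  B.mulVec (fun j => (z j : ℝ))

/-- The Λ-periodic Gaussian `f_{σ,Λ}(x)`. -/
def periodicGauss {n : ℕ} (B : Matrix (Fin n) (Fin n) ℝ) (σ : ℝ) (x : Fin n → ℝ) : ℝ :=
  (2 * π * σ ^ 2) ^ (-(n : ℝ) / 2) *
    ∑' z : Fin n → ℤ, Real.exp (-(sqnorm (x - latp B z)) / (2 * σ ^ 2))

/-- The flatness factor `ε_Λ(σ) = max_x |V(Λ) f_{σ,Λ}(x) − 1|`. -/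
def flatness {n : ℕ} (B : Matrix (Fin n) (Fin n) ℝ) (σ : ℝ) : ℝ :=
  ⨆ x : Fin n → ℝ, |(|B.det|) * periodicGauss B σ x - 1|
/-- Discrete Gaussian probability over the coset `L − c` of the point `B z − c`. -/
def cosetGauss {n : ℕ} (B : Matrix (Fin n) (Fin n) ℝ) (σ₀ : ℝ) (c : Fin n → ℝ)
    (z : Fin n → ℤ) : ℝ :=
  Real.exp (-(sqnorm (latp B z - c)) / (2 * σ₀ ^ 2)) /
    ∑' w : Fin n → ℤ, Real.exp (-(sqnorm (latp B w - c)) / (2 * σ₀ ^ 2))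

open MeasureTheory
open scoped Matrix

section

variable {n : ℕ}

lemma sqnorm_nonneg (v : Fin n → ℝ) : 0 ≤ sqnorm v :=
  Finset.sum_nonneg fun _ _ => sq_nonneg _

lemma sqnorm_sub_comm (u v : Fin n → ℝ) : sqnorm (u - v) = sqnorm (v - u) :=
  Finset.sum_congr rfl fun i _ => by simp only [Pi.sub_apply]; ring

@[fun_prop]
lemma continuous_sqnorm : Continuous (sqnorm : (Fin n → ℝ) → ℝ) :=
  continuous_finsetSum _ fun i _ => (continuous_apply i).pow 2

lemma sqnorm_div_two_sub_le_sqnorm_sub (u v : Fin n → ℝ) :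
    sqnorm u / 2 - sqnorm v ≤ sqnorm (u - v) := by
  simp only [sqnorm, Finset.sum_div, ← Finset.sum_sub_distrib]
  exact Finset.sum_le_sum fun i _ => by
    simp only [Pi.sub_apply]; nlinarith [sq_nonneg (u i - 2 * v i)]

lemma sqnorm_mulVec_le (A : Matrix (Fin n) (Fin n) ℝ) (v : Fin n → ℝ) :
    sqnorm (A *ᵥ v) ≤ (∑ i, ∑ j, A i j ^ 2) * sqnorm v := by
  rw [sqnorm, Finset.sum_mul]
  refine Finset.sum_le_sum fun i _ => ?_
  simpa [Matrix.mulVec, dotProduct, sqnorm] using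
    Finset.sum_mul_sq_le_sq_mul_sq Finset.univ (fun j => A i j) v

lemma exists_sqnorm_le_mul_sqnorm_mulVec {B : Matrix (Fin n) (Fin n) ℝ}
    (hB : B.det ≠ 0) : ∃ C > 0, ∀ v, sqnorm v ≤ C * sqnorm (B *ᵥ v) := by
  refine ⟨(∑ i, ∑ j, B⁻¹ i j ^ 2) + 1, by positivity, fun v => ?_⟩
  calc sqnorm v = sqnorm (B⁻¹ *ᵥ (B *ᵥ v)) := by
        rw [Matrix.mulVec_mulVec, Matrix.nonsing_inv_mul B (Ne.isUnit hB), Matrix.one_mulVec]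
    _ ≤ (∑ i, ∑ j, B⁻¹ i j ^ 2) * sqnorm (B *ᵥ v) := sqnorm_mulVec_le _ _
    _ ≤ ((∑ i, ∑ j, B⁻¹ i j ^ 2) + 1) * sqnorm (B *ᵥ v) := by
        nlinarith [sqnorm_nonneg (B *ᵥ v)]

lemma exp_neg_mul_sqnorm (a : ℝ) (v : Fin n → ℝ) :
    exp (-a * sqnorm v) = ∏ i, exp (-a * v i ^ 2) := by
  rw [← Real.exp_sum, sqnorm, Finset.mul_sum]

lemma latp_add (B : Matrix (Fin n) (Fin n) ℝ) (z w : Fin n → ℤ) :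
    latp B (z + w) = latp B z + latp B w := by
  simp only [latp, Pi.add_apply, Int.cast_add, ← Matrix.mulVec_add]
  rfl

lemma summable_exp_neg_mul_int_sq {b : ℝ} (hb : 0 < b) :
    Summable fun k : ℤ => exp (-b * (k : ℝ) ^ 2) := by
  have hnat : Summable fun m : ℕ => exp (-b * (m : ℝ) ^ 2) := by
    refine (summable_geometric_of_lt_one (exp_pos (-b)).le
      (exp_lt_one_iff.mpr (neg_lt_zero.mpr hb))).of_nonneg_of_le (fun m => (exp_pos _).le)
      fun m => ?_
    rw [← Real.exp_nat_mul, exp_le_exp]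
    have : (m : ℝ) ≤ (m : ℝ) ^ 2 := mod_cast Nat.le_self_pow two_ne_zero m
    nlinarith
  exact .of_nat_of_neg (by simpa using hnat) (by simpa using hnat)

lemma summable_prod_apply_of_nonneg {α : Type*} {g : α → ℝ} (hg0 : ∀ k, 0 ≤ g k)
    (hg : Summable g) (n : ℕ) : Summable fun z : Fin n → α => ∏ i, g (z i) := by
  induction n with
  | zero => exact .of_finite
  | succ n ih =>
    rw [← (Fin.consEquiv fun _ => α).summable_iff]
    refine (hg.mul_of_nonneg ih hg0 fun z => Finset.prod_nonneg fun i _ => hg0 _).congr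
      fun p => ?_
    simp [Fin.prod_univ_succ]

lemma exp_neg_mul_sq_mul_exp_neg_mul_sub_sq {a b : ℝ} (hab : a + b ≠ 0) (v y : ℝ) :
    exp (-a * y ^ 2) * exp (-b * (v - y) ^ 2)
      = exp (-(a + b) * (y - b * v / (a + b)) ^ 2) * exp (-(a * b / (a + b)) * v ^ 2) := by
  rw [← exp_add, ← exp_add]
  congr 1
  field_simp
  ring

lemma integrable_exp_neg_mul_sq_mul_exp_neg_mul_sub_sq {a b : ℝ} (hab : 0 < a + b) (v : ℝ) :
    Integrable fun y : ℝ => exp (-a * y ^ 2) * exp (-b * (v - y) ^ 2) := by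
  simp_rw [exp_neg_mul_sq_mul_exp_neg_mul_sub_sq hab.ne']
  exact ((integrable_exp_neg_mul_sq hab).comp_sub_right _).mul_const _

lemma integral_exp_neg_mul_sq_mul_exp_neg_mul_sub_sq {a b : ℝ} (hab : 0 < a + b) (v : ℝ) :
    ∫ y : ℝ, exp (-a * y ^ 2) * exp (-b * (v - y) ^ 2)
      = √(π / (a + b)) * exp (-(a * b / (a + b)) * v ^ 2) := by
  simp_rw [exp_neg_mul_sq_mul_exp_neg_mul_sub_sq hab.ne']
  rw [integral_mul_const, integral_sub_right_eq_self (fun y => exp (-(a + b) * y ^ 2)),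
    integral_gaussian]

lemma integrable_exp_neg_mul_sqnorm {a : ℝ} (ha : 0 < a) :
    Integrable fun y : Fin n → ℝ => exp (-a * sqnorm y) := by
  simp_rw [exp_neg_mul_sqnorm]
  exact Integrable.fintype_prod (f := fun _ t => exp (-a * t ^ 2))
    fun _ => integrable_exp_neg_mul_sq ha

lemma integral_exp_neg_mul_sqnorm (a : ℝ) :
    ∫ y : Fin n → ℝ, exp (-a * sqnorm y) = √(π / a) ^ n := by
  simp_rw [exp_neg_mul_sqnorm]
  rw [integral_fintype_prod_volume_eq_pow (fun t => exp (-a * t ^ 2)), integral_gaussian,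
    Fintype.card_fin]

lemma exp_neg_mul_sqnorm_mul_exp_neg_mul_sqnorm_sub (a b : ℝ) (v y : Fin n → ℝ) :
    exp (-a * sqnorm y) * exp (-b * sqnorm (v - y))
      = ∏ i, exp (-a * y i ^ 2) * exp (-b * (v i - y i) ^ 2) := by
  simp only [exp_neg_mul_sqnorm, ← Finset.prod_mul_distrib, Pi.sub_apply]

lemma integrable_exp_neg_mul_sqnorm_mul_exp_neg_mul_sqnorm_sub {a b : ℝ}
    (hab : 0 < a + b) (v : Fin n → ℝ) :
    Integrable fun y : Fin n → ℝ => exp (-a * sqnorm y) * exp (-b * sqnorm (v - y)) := by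
  simp_rw [exp_neg_mul_sqnorm_mul_exp_neg_mul_sqnorm_sub]
  exact Integrable.fintype_prod (f := fun i t => exp (-a * t ^ 2) * exp (-b * (v i - t) ^ 2))
    fun i => integrable_exp_neg_mul_sq_mul_exp_neg_mul_sub_sq hab (v i)

lemma integral_exp_neg_mul_sqnorm_mul_exp_neg_mul_sqnorm_sub {a b : ℝ}
    (hab : 0 < a + b) (v : Fin n → ℝ) :
    ∫ y : Fin n → ℝ, exp (-a * sqnorm y) * exp (-b * sqnorm (v - y))
      = √(π / (a + b)) ^ n * exp (-(a * b / (a + b)) * sqnorm v) := by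
  simp_rw [exp_neg_mul_sqnorm_mul_exp_neg_mul_sqnorm_sub]
  rw [integral_fintype_prod_volume_eq_prod
      (fun i t => exp (-a * t ^ 2) * exp (-b * (v i - t) ^ 2))]
  simp only [integral_exp_neg_mul_sq_mul_exp_neg_mul_sub_sq hab, Finset.prod_mul_distrib,
    Finset.prod_const, Finset.card_univ, Fintype.card_fin, ← exp_neg_mul_sqnorm]

/-- `ρ_b(L - x)`; the paper's `ρ_σ(L - x)` is the case `b = 1/(2σ²)`. -/
def gaussMass (B : Matrix (Fin n) (Fin n) ℝ) (b : ℝ) (x : Fin n → ℝ) : ℝ :=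
  ∑' z : Fin n → ℤ, exp (-b * sqnorm (latp B z - x))

variable {B : Matrix (Fin n) (Fin n) ℝ}

lemma summable_exp_neg_mul_sqnorm_latp_sub (hB : B.det ≠ 0) {b : ℝ} (hb : 0 < b)
    (x : Fin n → ℝ) : Summable fun z : Fin n → ℤ => exp (-b * sqnorm (latp B z - x)) := by
  obtain ⟨C, hC, hCB⟩ := exists_sqnorm_le_mul_sqnorm_mulVec hB
  have hb' : 0 < b / (2 * C) := by positivity
  refine ((summable_prod_apply_of_nonneg (fun _ => (exp_pos _).le)
    (summable_exp_neg_mul_int_sq hb') n).mul_left (exp (b * sqnorm x))).of_nonneg_of_le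
    (fun _ => (exp_pos _).le) fun z => ?_
  have hz : sqnorm (fun i => (z i : ℝ)) ≤ C * sqnorm (latp B z) := hCB _
  have hhalf := sqnorm_div_two_sub_le_sqnorm_sub (latp B z) x
  rw [← exp_neg_mul_sqnorm (n := n) _ fun i => (z i : ℝ), ← exp_add, exp_le_exp]
  have : b / (2 * C) * sqnorm (fun i => (z i : ℝ)) ≤ b * (sqnorm (latp B z) / 2) := by
    rw [div_mul_eq_mul_div, div_le_iff₀ (by positivity)]
    nlinarith [mul_le_mul_of_nonneg_left hz hb.le]
  nlinarith

lemma gaussMass_nonneg (b : ℝ) (x : Fin n → ℝ) : 0 ≤ gaussMass B b x :=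
  tsum_nonneg fun _ => (exp_pos _).le

lemma gaussMass_add_latp (b : ℝ) (x : Fin n → ℝ) (w : Fin n → ℤ) :
    gaussMass B b (x + latp B w) = gaussMass B b x := by
  rw [gaussMass, ← (Equiv.addRight w).tsum_eq]
  refine tsum_congr fun z => ?_
  rw [Equiv.coe_addRight, latp_add, add_sub_add_right_eq_sub]

lemma gaussMass_le_exp_mul_gaussMass_zero (hB : B.det ≠ 0) {b : ℝ} (hb : 0 < b)
    (x : Fin n → ℝ) : gaussMass B b x ≤ exp (b * sqnorm x) * gaussMass B (b / 2) 0 := by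
  rw [gaussMass, gaussMass, ← tsum_mul_left]
  refine (summable_exp_neg_mul_sqnorm_latp_sub hB hb x).tsum_le_tsum (fun z => ?_)
    ((summable_exp_neg_mul_sqnorm_latp_sub hB (half_pos hb) 0).mul_left _)
  rw [← exp_add, exp_le_exp, sub_zero]
  nlinarith [sqnorm_div_two_sub_le_sqnorm_sub (latp B z) x]

lemma exists_eq_latp_add_mulVec (hB : B.det ≠ 0) (x : Fin n → ℝ) :
    ∃ (w : Fin n → ℤ) (r : Fin n → ℝ), (∀ i, |r i| ≤ 1) ∧ x = latp B w + B *ᵥ r := by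
  set u := B⁻¹ *ᵥ x
  refine ⟨fun i => ⌊u i⌋, fun i => u i - ⌊u i⌋, fun i => ?_, ?_⟩
  · rw [abs_le]
    constructor <;> linarith [Int.floor_le (u i), Int.lt_floor_add_one (u i)]
  · have hu : ((fun i => (⌊u i⌋ : ℝ)) + fun i => u i - ⌊u i⌋) = u := by
      funext i; simp
    rw [latp, ← Matrix.mulVec_add, hu, Matrix.mulVec_mulVec,
      Matrix.mul_nonsing_inv B (Ne.isUnit hB), Matrix.one_mulVec]

lemma bddAbove_range_gaussMass (hB : B.det ≠ 0) {b : ℝ} (hb : 0 < b) :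
    BddAbove (Set.range (gaussMass B b)) := by
  refine ⟨exp (b * ((∑ i, ∑ j, B i j ^ 2) * n)) * gaussMass B (b / 2) 0, ?_⟩
  rintro _ ⟨x, rfl⟩
  obtain ⟨w, r, hr, rfl⟩ := exists_eq_latp_add_mulVec hB x
  have hr : sqnorm r ≤ n := by
    calc sqnorm r ≤ ∑ _i : Fin n, (1 : ℝ) :=
          Finset.sum_le_sum fun i _ => by rw [← sq_abs]; nlinarith [hr i, abs_nonneg (r i)]
      _ = n := by simp
  rw [add_comm, gaussMass_add_latp]
  refine (gaussMass_le_exp_mul_gaussMass_zero hB hb _).trans ?_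
  gcongr
  · exact gaussMass_nonneg _ _
  · exact (sqnorm_mulVec_le B r).trans (by gcongr)

/-- Both sides come from `∫ exp(-a‖y‖²) ρ_b(L - c - y) dy`: integrating termwise gives the left
side by the Gaussian convolution identity, and bounding `ρ_b` by `M` first gives the right. -/
lemma sqrt_pow_mul_gaussMass_le (hB : B.det ≠ 0) {a b M : ℝ} (ha : 0 < a) (hb : 0 < b)
    (hM : ∀ x, gaussMass B b x ≤ M) (c : Fin n → ℝ) :
    √(π / (a + b)) ^ n * gaussMass B (a * b / (a + b)) c ≤ √(π / a) ^ n * M := by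
  set f : (Fin n → ℤ) → (Fin n → ℝ) → ℝ := fun z y =>
    exp (-a * sqnorm y) * exp (-b * sqnorm (latp B z - c - y))
  have hf_int (z) : ∫ y, f z y = √(π / (a + b)) ^ n
      * exp (-(a * b / (a + b)) * sqnorm (latp B z - c)) :=
    integral_exp_neg_mul_sqnorm_mul_exp_neg_mul_sqnorm_sub (by positivity) _
  have hf_meas (z) : AEStronglyMeasurable (f z) := by
    unfold f; fun_prop
  have hf_lintegral : ∑' z, ∫⁻ y, ‖f z y‖ₑ ≠ ⊤ := by
    have hlin (z) : ∫⁻ y, ‖f z y‖ₑ = ENNReal.ofReal (∫ y, f z y) := by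
      rw [ofReal_integral_eq_lintegral_ofReal
        (integrable_exp_neg_mul_sqnorm_mul_exp_neg_mul_sqnorm_sub (by positivity) _)
        (.of_forall fun y => by positivity)]
      exact lintegral_congr fun y => enorm_eq_ofReal (by positivity)
    simp_rw [hlin, hf_int]
    rw [← ENNReal.ofReal_tsum_of_nonneg (fun z => by positivity)
      ((summable_exp_neg_mul_sqnorm_latp_sub hB (by positivity) c).mul_left _)]
    exact ENNReal.ofReal_ne_top
  calc √(π / (a + b)) ^ n * gaussMass B (a * b / (a + b)) c
      = ∑' z, ∫ y, f z y := by
        rw [gaussMass, ← tsum_mul_left]; exact tsum_congr fun z => (hf_int z).symm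
    _ = ∫ y, exp (-a * sqnorm y) * gaussMass B b (c + y) := by
        rw [← integral_tsum hf_meas hf_lintegral]
        refine integral_congr_ae (.of_forall fun y => ?_)
        simp only [f, gaussMass, ← tsum_mul_left, sub_sub]
    _ ≤ ∫ y, exp (-a * sqnorm y) * M :=
        integral_mono_of_nonneg (.of_forall fun y => mul_nonneg (exp_pos _).le
          (gaussMass_nonneg _ _)) ((integrable_exp_neg_mul_sqnorm ha).mul_const M)
          (.of_forall fun y => mul_le_mul_of_nonneg_left (hM _) (exp_pos _).le)
    _ = √(π / a) ^ n * M := by rw [integral_mul_const, integral_exp_neg_mul_sqnorm]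

lemma gaussMass_le_of_lt (hB : B.det ≠ 0) {b' b M : ℝ} (hb' : 0 < b') (hb'b : b' < b)
    (hM : ∀ x, gaussMass B b x ≤ M) (c : Fin n → ℝ) :
    gaussMass B b' c ≤ √(b / b') ^ n * M := by
  have hb : 0 < b := hb'.trans hb'b
  have hbb' : 0 < b - b' := sub_pos.mpr hb'b
  set a := b * b' / (b - b') with ha_def
  have ha : 0 < a := div_pos (mul_pos hb hb') hbb'
  have hab : a * b / (a + b) = b' := by rw [ha_def]; field_simp; ring
  have hsqrt : √(π / a) = √(b / b') * √(π / (a + b)) := by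
    rw [← sqrt_mul (div_pos hb hb').le, ha_def]; congr 1; field_simp; ring
  have key := sqrt_pow_mul_gaussMass_le hB ha hb hM c
  rw [hab, hsqrt, mul_pow, mul_comm (√(b / b') ^ n), mul_assoc] at key
  exact le_of_mul_le_mul_left key (pow_pos (sqrt_pos.mpr (div_pos pi_pos (add_pos ha hb))) n)

lemma tsum_ite_lt_le_exp_mul_gaussMass (hB : B.det ≠ 0) {b' b r : ℝ} (hb' : 0 < b')
    (hb'b : b' ≤ b) (hr : 0 ≤ r) (c : Fin n → ℝ) :
    ∑' z : Fin n → ℤ, (if r < √(sqnorm (latp B z - c)) then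
        exp (-b * sqnorm (latp B z - c)) else 0)
      ≤ exp (-(b - b') * r ^ 2) * gaussMass B b' c := by
  have hterm (z : Fin n → ℤ) :
      (if r < √(sqnorm (latp B z - c)) then exp (-b * sqnorm (latp B z - c)) else 0)
        ≤ exp (-(b - b') * r ^ 2) * exp (-b' * sqnorm (latp B z - c)) := by
    split_ifs with h
    · rw [← exp_add, exp_le_exp]
      nlinarith [(lt_sqrt hr).mp h]
    · positivity
  have hsum := (summable_exp_neg_mul_sqnorm_latp_sub hB hb' c).mul_left
    (exp (-(b - b') * r ^ 2))
  rw [gaussMass, ← tsum_mul_left]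
  exact (hsum.of_nonneg_of_le (fun z => by split_ifs <;> positivity) hterm).tsum_le_tsum
    hterm hsum

lemma tsum_ite_sqrt_two_pi_mul_lt_le (hB : B.det ≠ 0) {σ M : ℝ} (hσ : 0 < σ)
    (hM : ∀ x, gaussMass B (2 * σ ^ 2)⁻¹ x ≤ M) (c : Fin n → ℝ) :
    ∑' z : Fin n → ℤ, (if √(2 * π * n) * σ < √(sqnorm (latp B z - c)) then
        exp (-(2 * σ ^ 2)⁻¹ * sqnorm (latp B z - c)) else 0)
      ≤ (exp (1 / 2 - π) * √(2 * π)) ^ n * M := by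
  set b := (2 * σ ^ 2)⁻¹
  have hb : 0 < b := by positivity
  have h2π : 1 < 2 * π := by linarith [pi_gt_three]
  have hexp : exp (-(b - b / (2 * π)) * (√(2 * π * n) * σ) ^ 2) = exp (1 / 2 - π) ^ n := by
    rw [← exp_nat_mul, mul_pow, sq_sqrt (by positivity)]
    congr 1
    simp only [b]
    field_simp
    ring
  calc _ ≤ exp (-(b - b / (2 * π)) * (√(2 * π * n) * σ) ^ 2) * gaussMass B (b / (2 * π)) c :=
        tsum_ite_lt_le_exp_mul_gaussMass hB (by positivity) (div_le_self hb.le h2π.le)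
          (by positivity) c
    _ ≤ exp (1 / 2 - π) ^ n * (√(b / (b / (2 * π))) ^ n * M) := by
        rw [hexp]
        gcongr
        exact gaussMass_le_of_lt hB (by positivity) (div_lt_self hb h2π) hM c
    _ = (exp (1 / 2 - π) * √(2 * π)) ^ n * M := by
        rw [div_div_cancel₀ hb.ne', mul_pow, mul_assoc]

lemma exp_neg_div_two_mul_sq (q σ : ℝ) : exp (-q / (2 * σ ^ 2)) = exp (-(2 * σ ^ 2)⁻¹ * q) := by
  ring_nf

lemma periodicGauss_eq_mul_gaussMass (σ : ℝ) (x : Fin n → ℝ) :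
    periodicGauss B σ x = (2 * π * σ ^ 2) ^ (-(n : ℝ) / 2) * gaussMass B (2 * σ ^ 2)⁻¹ x := by
  simp only [periodicGauss, gaussMass, exp_neg_div_two_mul_sq, sqnorm_sub_comm x]

lemma cosetGauss_eq_div_gaussMass (σ : ℝ) (c : Fin n → ℝ) (z : Fin n → ℤ) :
    cosetGauss B σ c z
      = exp (-(2 * σ ^ 2)⁻¹ * sqnorm (latp B z - c)) / gaussMass B (2 * σ ^ 2)⁻¹ c := by
  simp only [cosetGauss, gaussMass, exp_neg_div_two_mul_sq]

lemma abs_mul_gaussMass_sub_one_le_flatness (hB : B.det ≠ 0) {σ : ℝ} (hσ : σ ≠ 0)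
    (x : Fin n → ℝ) :
    |(|B.det| * (2 * π * σ ^ 2) ^ (-(n : ℝ) / 2)) * gaussMass B (2 * σ ^ 2)⁻¹ x - 1|
      ≤ flatness B σ := by
  set W := |B.det| * (2 * π * σ ^ 2) ^ (-(n : ℝ) / 2)
  have hW : 0 ≤ W := by positivity
  obtain ⟨M, hM⟩ := bddAbove_range_gaussMass hB (b := (2 * σ ^ 2)⁻¹) (by positivity)
  have hbdd : BddAbove (Set.range fun x => |(|B.det|) * periodicGauss B σ x - 1|) := by
    refine ⟨W * M + 1, ?_⟩
    rintro _ ⟨y, rfl⟩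
    have hy := hM ⟨y, rfl⟩
    have := gaussMass_nonneg (B := B) (2 * σ ^ 2)⁻¹ y
    simp only [periodicGauss_eq_mul_gaussMass, ← mul_assoc]
    rw [abs_le]
    constructor <;> nlinarith [mul_le_mul_of_nonneg_left hy hW]
  rw [mul_assoc, ← periodicGauss_eq_mul_gaussMass]
  exact le_ciSup hbdd x

end

lemma exp_half_sub_pi_mul_sqrt_two_pi_lt : exp (1 / 2 - π) * √(2 * π) < 1 / 2 := by
  have hsqrt : √(2 * π) < 2.51 := by
    rw [sqrt_lt' (by norm_num)]; nlinarith [pi_lt_d2]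
  have hexp : 5.02 < exp (π - 1 / 2) := by
    have := quadratic_le_exp_of_nonneg (x := π - 1 / 2) (by linarith [pi_gt_three])
    nlinarith [pi_gt_three]
  rw [show (1 : ℝ) / 2 - π = -(π - 1 / 2) by ring, exp_neg, inv_mul_lt_iff₀ (exp_pos _)]
  linarith

/-- Banaszczyk-type tail bound: the discrete Gaussian mass outside the ball of
radius `√(2πn)·σ₀` is less than `((1+ε_L(σ₀))/(1−ε_L(σ₀)))·2^{−n}`. -/
theorem discrete_gaussian_tail (n : ℕ) (hn : 0 < n)
    (B : Matrix (Fin n) (Fin n) ℝ) (hB : B.det ≠ 0) (c : Fin n → ℝ)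
    (σ₀ : ℝ) (hσ₀ : 0 < σ₀) (hflat : flatness B σ₀ < 1) :
    (∑' z : Fin n → ℤ,
        if Real.sqrt (2 * π * n) * σ₀ < Real.sqrt (sqnorm (latp B z - c)) then
          cosetGauss B σ₀ c z
        else 0) <
      ((1 + flatness B σ₀) / (1 - flatness B σ₀)) * 2 ^ (-(n : ℝ)) := by
  set ε := flatness B σ₀
  set b := (2 * σ₀ ^ 2)⁻¹
  set W := |B.det| * (2 * π * σ₀ ^ 2) ^ (-(n : ℝ) / 2)
  have hW : 0 < W := by have := abs_pos.mpr hB; positivity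
  have hflat_at x := abs_le.mp (abs_mul_gaussMass_sub_one_le_flatness hB hσ₀.ne' x)
  have hε : 0 ≤ ε := (abs_nonneg _).trans (abs_mul_gaussMass_sub_one_le_flatness hB hσ₀.ne' c)
  have hlower : (1 - ε) / W ≤ gaussMass B b c := by
    rw [div_le_iff₀' hW]; linarith [(hflat_at c).1]
  have htail := tsum_ite_sqrt_two_pi_mul_lt_le hB hσ₀ (M := (1 + ε) / W)
    (fun x => by rw [le_div_iff₀' hW]; linarith [(hflat_at x).2]) c
  calc _ = (∑' z : Fin n → ℤ, if √(2 * π * n) * σ₀ < √(sqnorm (latp B z - c)) then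
          exp (-b * sqnorm (latp B z - c)) else 0) / gaussMass B b c := by
        rw [← tsum_div_const]
        refine tsum_congr fun z => ?_
        rw [cosetGauss_eq_div_gaussMass, ite_div, zero_div]
    _ ≤ (exp (1 / 2 - π) * √(2 * π)) ^ n * ((1 + ε) / W) / ((1 - ε) / W) :=
        div_le_div₀ (by positivity) htail (by positivity) hlower
    _ = (exp (1 / 2 - π) * √(2 * π)) ^ n * ((1 + ε) / (1 - ε)) := by
        field_simp [(sub_pos.mpr hflat).ne']
    _ < (1 / 2) ^ n * ((1 + ε) / (1 - ε)) := by
        gcongr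
        exact exp_half_sub_pi_mul_sqrt_two_pi_lt
    _ = (1 + ε) / (1 - ε) * 2 ^ (-(n : ℝ)) := by
        rw [rpow_neg zero_le_two, rpow_natCast, one_div, inv_pow, mul_comm]
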